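/- Under the setup of Theorem 2 (i.i.d. nonnegative ξᵢ with tail regularly varying of index −1; liminf xₙ/(nG(xₙ)) > 0; aₙ → a ∈ (0,∞)): let i* be a uniformly chosen index attaining Mₙ and S_{n,k} the sum of any k of the remaining n−1 variables (chosen independently of their values). Then for every ε > 0, max_{1≤k≤n−1} P(|S_{n,k} − kG(xₙ)| ≥ εxₙ | Mₙ ≥ aₙxₙ) → 0 as n → ∞. -/

import Mathlib

/-!
Truncate the summands at `b = η xₙ` with `η` small. Karamata's bound `x F̄(x) = o(G(x))` together
with `n G(xₙ) = O(xₙ)` gives `n F̄(η xₙ) → 0`, so with high probability no summand is truncated,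
and truncation moves the mean `k G(xₙ)` by at most `n xₙ F̄(η xₙ) = o(xₙ)`. The truncated sum has
variance at most `k b G(b) ≤ η xₙ · n G(xₙ) = O(η xₙ²)`, so Chebyshev's inequality controls its
deviation at scale `ε xₙ`. Given `i* = i`, the sum over `K i` is independent of `ξᵢ`; hence the
numerator is at most `n F̄(aₙxₙ)` times the unconditional deviation bound, while
`P(Mₙ ≥ aₙxₙ) = 1 - (1 - F̄(aₙxₙ))ⁿ ≥ n F̄(aₙxₙ) / 2` because `n F̄(aₙxₙ) ≤ 1`.
-/

open Filter MeasureTheory ProbabilityTheory Finset Asymptotics Topology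

lemma mul_div_two_le_one_sub_one_sub_pow {p : ℝ} (hp0 : 0 ≤ p) (hp1 : p ≤ 1) {n : ℕ}
    (hnp : n * p ≤ 1) : n * p / 2 ≤ 1 - (1 - p) ^ n := by
  have hq0 : 0 ≤ (1 - p) ^ n := pow_nonneg (by linarith) n
  -- `(1 - p)ⁿ ≤ (1 + p)⁻ⁿ ≤ (1 + n p)⁻¹`
  have hq : (1 - p) ^ n * (1 + n * p) ≤ 1 :=
    calc (1 - p) ^ n * (1 + n * p) ≤ (1 - p) ^ n * (1 + p) ^ n := by
          gcongr; exact one_add_mul_le_pow (by linarith) n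
      _ = (1 - p ^ 2) ^ n := by rw [← mul_pow]; ring
      _ ≤ 1 := pow_le_one₀ (by nlinarith) (by nlinarith)
  nlinarith [mul_nonneg hp0 (Nat.cast_nonneg (α := ℝ) n)]

def SlowlyVarying (ℓ : ℝ → ℝ) : Prop :=
  ∀ l > (0 : ℝ), Tendsto (fun x => ℓ (l * x) / ℓ x) atTop (𝓝 1)

lemma SlowlyVarying.eventually_ne_zero {ℓ : ℝ → ℝ} (hℓ : SlowlyVarying ℓ) :
    ∀ᶠ x in atTop, ℓ x ≠ 0 := by
  filter_upwards [(hℓ 1 one_pos).eventually_ne one_ne_zero] with x hx hx0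
  simp [hx0] at hx

section IntegratedTail

variable {F : ℝ → ℝ}

lemma Antitone.intervalIntegral_le (hF : Antitone F) {u v : ℝ} (huv : u ≤ v) :
    ∫ t in u..v, F t ≤ (v - u) * F u := by
  calc ∫ t in u..v, F t ≤ ∫ _ in u..v, F u :=
        intervalIntegral.integral_mono_on huv hF.intervalIntegrable intervalIntegrable_const
          fun t ht => hF ht.1
    _ = (v - u) * F u := by rw [intervalIntegral.integral_const, smul_eq_mul]

lemma Antitone.le_intervalIntegral (hF : Antitone F) {u v : ℝ} (huv : u ≤ v) :
    (v - u) * F v ≤ ∫ t in u..v, F t := by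
  calc (v - u) * F v = ∫ _ in u..v, F v := by rw [intervalIntegral.integral_const, smul_eq_mul]
    _ ≤ ∫ t in u..v, F t :=
        intervalIntegral.integral_mono_on huv intervalIntegrable_const hF.intervalIntegrable
          fun t ht => hF ht.2

lemma Antitone.intervalIntegral_mono (hF : Antitone F) (hF0 : 0 ≤ F) {u v : ℝ} (huv : u ≤ v) :
    ∫ t in (0)..u, F t ≤ ∫ t in (0)..v, F t := by
  rw [← intervalIntegral.integral_add_adjacent_intervals (a := 0) (b := u) (c := v)
    hF.intervalIntegrable hF.intervalIntegrable]
  linarith [intervalIntegral.integral_nonneg (μ := volume) huv fun t _ => hF0 t]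

lemma Antitone.pos_of_slowlyVarying (hF : Antitone F) (hF0 : 0 ≤ F) {ℓ : ℝ → ℝ}
    (hℓ : SlowlyVarying ℓ) (htail : ∀ x > 0, F x = ℓ x / x) (t : ℝ) : 0 < F t := by
  obtain ⟨y, hy, hty, hy0⟩ :=
    (hℓ.eventually_ne_zero.and ((eventually_ge_atTop t).and (eventually_gt_atTop 0))).exists
  have hFy : F y ≠ 0 := by rw [htail y hy0]; exact div_ne_zero hy hy0.ne'
  exact ((hF0 y).lt_of_ne' hFy).trans_le (hF hty)

/-- Karamata's argument: over each of the dyadic blocks `[2⁻ʲ⁻¹y, 2⁻ʲy]`, `j < M`, the integral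
of `F` is at least `ℓ(2⁻ʲy)/2 ≥ ℓ(y)/4 = y F(y)/4` for large `y`. -/
theorem SlowlyVarying.isLittleO_intervalIntegral (hF : Antitone F) (hF0 : 0 ≤ F) {ℓ : ℝ → ℝ}
    (hℓ : SlowlyVarying ℓ) (htail : ∀ x > 0, F x = ℓ x / x) :
    (fun y => y * F y) =o[atTop] fun y => ∫ t in (0)..y, F t := by
  have hℓF : ∀ y > 0, ℓ y = y * F y := fun y hy => by rw [htail y hy, mul_div_cancel₀ _ hy.ne']
  refine isLittleO_iff.2 fun κ hκ => ?_
  obtain ⟨M, hM⟩ := exists_nat_ge (4 / κ)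
  have hblocks : ∀ᶠ y in atTop, ∀ j ∈ range M, ℓ y / 2 ≤ ℓ ((1 / 2) ^ j * y) := by
    refine (eventually_all_finset _).2 fun j _ => ?_
    filter_upwards [(hℓ ((1 / 2) ^ j) (by positivity)).eventually
      (eventually_gt_nhds one_half_lt_one), hℓ.eventually_ne_zero, eventually_gt_atTop 0]
      with y hj hy hy0
    have hℓy : 0 < ℓ y := (hℓF y hy0 ▸ mul_nonneg hy0.le (hF0 y)).lt_of_ne' hy
    linarith [(lt_div_iff₀ hℓy).1 hj]
  filter_upwards [hblocks, eventually_gt_atTop 0] with y hy hy0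
  set g : ℕ → ℝ := fun j => ∫ t in (0)..(1 / 2) ^ j * y, F t
  have hblock : ∀ j ∈ range M, y * F y / 4 ≤ g j - g (j + 1) := by
    intro j hj
    set u := (1 / 2 : ℝ) ^ j * y
    have hu : 0 < u := by positivity
    have hgj : g j - g (j + 1) = ∫ t in u / 2..u, F t := by
      have hu2 : (1 / 2 : ℝ) ^ (j + 1) * y = u / 2 := by ring
      simp only [g, hu2]
      exact intervalIntegral.integral_interval_sub_left hF.intervalIntegrable
        hF.intervalIntegrable
    have hint := hF.le_intervalIntegral (u := u / 2) (v := u) (by linarith)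
    have hℓu := hy j hj
    rw [hℓF y hy0, hℓF u hu] at hℓu
    nlinarith
  have hsum : M * (y * F y / 4) ≤ g 0 - g M := by
    calc M * (y * F y / 4) = ∑ _j ∈ range M, y * F y / 4 := by simp
      _ ≤ ∑ j ∈ range M, (g j - g (j + 1)) := Finset.sum_le_sum hblock
      _ = g 0 - g M := Finset.sum_range_sub' g M
  have hgM : 0 ≤ g M := intervalIntegral.integral_nonneg (by positivity) fun t _ => hF0 t
  have hg0 : g 0 = ∫ t in (0)..y, F t := by simp [g]
  rw [Real.norm_of_nonneg (mul_nonneg hy0.le (hF0 y)),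
    Real.norm_of_nonneg (intervalIntegral.integral_nonneg hy0.le fun t _ => hF0 t), ← hg0]
  have h4 : 4 ≤ κ * M := by rwa [div_le_iff₀ hκ, mul_comm] at hM
  nlinarith [mul_nonneg hy0.le (hF0 y)]

lemma Antitone.tendsto_atTop_of_tendsto_zero (hF : Antitone F) (hpos : ∀ t, 0 < F t)
    {α : Type*} {l : Filter α} {x : α → ℝ} (h : Tendsto (fun n => F (x n)) l (𝓝 0)) :
    Tendsto x l atTop :=
  tendsto_atTop.2 fun B => (h.eventually (gt_mem_nhds (hpos B))).mono fun _ hn =>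
    le_of_not_gt fun hlt => (hF hlt.le).not_gt hn

lemma Antitone.tendsto_atTop_of_mul_intervalIntegral_le (hF : Antitone F) (hpos : ∀ t, 0 < F t)
    {x : ℕ → ℝ} (hx : ∀ n, 0 < x n) {c : ℝ} (hc : 0 < c)
    (hnG : ∀ᶠ n in atTop, c * (n * ∫ t in (0)..x n, F t) ≤ x n) :
    Tendsto x atTop atTop := by
  refine hF.tendsto_atTop_of_tendsto_zero hpos (squeeze_zero' (.of_forall fun n => (hpos _).le)
    ?_ (tendsto_const_div_atTop_nhds_zero_nat c⁻¹))
  filter_upwards [hnG, eventually_gt_atTop 0] with n hn hn0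
  have hxF := hF.le_intervalIntegral (hx n).le
  rw [sub_zero] at hxF
  rw [le_div_iff₀ (by positivity), ← mul_le_mul_iff_of_pos_left hc, mul_inv_cancel₀ hc.ne']
  refine le_of_mul_le_mul_left ?_ (hx n)
  nlinarith [mul_le_mul_of_nonneg_left hxF (by positivity : (0 : ℝ) ≤ c * n)]

lemma Antitone.tendsto_natCast_mul_apply_mul_zero (hF : Antitone F) (hF0 : 0 ≤ F)
    (hkar : (fun y => y * F y) =o[atTop] fun y => ∫ t in (0)..y, F t)
    {x : ℕ → ℝ} (hx : Tendsto x atTop atTop) {c : ℝ} (hc : 0 < c)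
    (hnG : ∀ᶠ n in atTop, c * (n * ∫ t in (0)..x n, F t) ≤ x n) {η : ℝ} (hη : 0 < η)
    (hη1 : η ≤ 1) : Tendsto (fun n : ℕ => n * F (η * x n)) atTop (𝓝 0) := by
  refine tendsto_order.2 ⟨fun a ha => .of_forall fun n =>
    ha.trans_le (mul_nonneg n.cast_nonneg (hF0 _)), fun a ha => ?_⟩
  have hbound :=
    (hx.const_mul_atTop hη).eventually (hkar.bound (by positivity : 0 < a / 2 * c * η))
  filter_upwards [hbound, hnG, hx.eventually_gt_atTop 0] with n hn hnG hx0
  have hxη : 0 < η * x n := by positivity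
  rw [Real.norm_of_nonneg (mul_nonneg hxη.le (hF0 _)),
    Real.norm_of_nonneg (intervalIntegral.integral_nonneg hxη.le fun t _ => hF0 t)] at hn
  have hmono := hF.intervalIntegral_mono hF0 (mul_le_of_le_one_left hx0.le hη1)
  have key : η * x n * (n * F (η * x n)) ≤ η * x n * (a / 2) :=
    calc η * x n * (n * F (η * x n)) = n * (η * x n * F (η * x n)) := by ring
      _ ≤ n * (a / 2 * c * η * ∫ t in (0)..x n, F t) :=
          mul_le_mul_of_nonneg_left (hn.trans (by gcongr)) n.cast_nonneg
      _ = a / 2 * η * (c * (n * ∫ t in (0)..x n, F t)) := by ring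
      _ ≤ a / 2 * η * x n := by gcongr
      _ = η * x n * (a / 2) := by ring
  exact (le_of_mul_le_mul_left key hxη).trans_lt (half_lt_self ha)

end IntegratedTail

section IID

variable {Ω : Type*} [MeasurableSpace Ω] {μ : Measure Ω}

lemma variance_le_mul_integral [IsProbabilityMeasure μ] {Y : Ω → ℝ} (hY : Measurable Y) {b : ℝ}
    (h0 : ∀ ω, 0 ≤ Y ω) (hb : ∀ ω, Y ω ≤ b) : variance Y μ ≤ b * μ[Y] := by
  have hbound : ∀ᵐ ω ∂μ, ‖Y ω‖ ≤ b :=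
    .of_forall fun ω => (Real.norm_of_nonneg (h0 ω)).trans_le (hb ω)
  have hY2 : MemLp Y 2 μ := .of_bound hY.aestronglyMeasurable b hbound
  have hY1 : Integrable Y μ := .of_bound hY.aestronglyMeasurable b hbound
  calc variance Y μ ≤ μ[Y ^ 2] := variance_le_expectation_sq hY.aestronglyMeasurable
    _ ≤ μ[fun ω => b * Y ω] := integral_mono (f := Y ^ 2) hY2.integrable_sq (hY1.const_mul b)
          fun ω => by simp only [Pi.pow_apply]; nlinarith [h0 ω, hb ω]
    _ = b * μ[Y] := integral_const_mul b _

lemma integral_min_eq_setIntegral_measureReal_le [IsFiniteMeasure μ] {Y : Ω → ℝ}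
    (hY : Measurable Y) (h0 : ∀ ω, 0 ≤ Y ω) {b : ℝ} (hb : 0 ≤ b) :
    ∫ ω, min (Y ω) b ∂μ = ∫ t in Set.Ioc 0 b, μ.real {ω | t ≤ Y ω} := by
  have hmin : Integrable (fun ω => min (Y ω) b) μ :=
    .of_bound (hY.min measurable_const).aestronglyMeasurable b (.of_forall fun ω => by
      rw [Real.norm_of_nonneg (le_min (h0 ω) hb)]; exact min_le_right _ _)
  rw [hmin.integral_eq_integral_Ioc_meas_le (.of_forall fun ω => le_min (h0 ω) hb)
    (.of_forall fun ω => min_le_right _ _)]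
  refine setIntegral_congr_fun measurableSet_Ioc fun t ht => ?_
  simp only [le_min_iff, ht.2, and_true]

lemma antitone_measureReal_le [IsFiniteMeasure μ] (Y : Ω → ℝ) :
    Antitone fun t => μ.real {ω | t ≤ Y ω} :=
  fun _ _ hst => measureReal_mono fun _ hω => hst.trans hω

variable {ξ : ℕ → Ω → ℝ}

lemma measureReal_abs_sum_min_sub_ge_le [IsProbabilityMeasure μ] (hmeas : ∀ i, Measurable (ξ i))
    (hindep : iIndepFun ξ μ) (hident : ∀ i, IdentDistrib (ξ i) (ξ 0) μ μ)
    (hξ0 : ∀ i ω, 0 ≤ ξ i ω) (S : Finset ℕ) {b r : ℝ} (hb : 0 ≤ b) (hr : 0 < r) :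
    μ.real {ω | r ≤ |∑ j ∈ S, min (ξ j ω) b - #S * ∫ ω, min (ξ 0 ω) b ∂μ|} ≤
      #S * (b * ∫ ω, min (ξ 0 ω) b ∂μ) / r ^ 2 := by
  set Y : ℕ → Ω → ℝ := fun j ω => min (ξ j ω) b
  have hYmeas (j : ℕ) : Measurable (Y j) := (hmeas j).min measurable_const
  have hYmem (j : ℕ) : MemLp (Y j) 2 μ := .of_bound (hYmeas j).aestronglyMeasurable b
    (.of_forall fun ω => by
      rw [Real.norm_of_nonneg (le_min (hξ0 j ω) hb)]; exact min_le_right _ _)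
  have hYident (j : ℕ) : IdentDistrib (Y j) (Y 0) μ μ :=
    (hident j).comp (measurable_id.min measurable_const)
  have hmean : ∫ ω, ∑ j ∈ S, Y j ω ∂μ = #S * μ[Y 0] := by
    rw [integral_finsetSum S fun j _ => (hYmem j).integrable one_le_two]
    simp [(hYident _).integral_eq]
  have hvar : variance (∑ j ∈ S, Y j) μ ≤ (#S : ℝ) * (b * μ[Y 0]) := by
    rw [IndepFun.variance_sum (fun j _ => hYmem j) fun i _ j _ hij =>
      (hindep.comp (fun _ y => min y b) fun _ => measurable_id.min measurable_const).indepFun hij]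
    calc ∑ j ∈ S, variance (Y j) μ ≤ ∑ _j ∈ S, b * μ[Y 0] := sum_le_sum fun j _ =>
          (hYident j).variance_eq ▸ variance_le_mul_integral (hYmeas 0)
            (fun ω => le_min (hξ0 0 ω) hb) fun ω => min_le_right _ _
      _ = #S * (b * μ[Y 0]) := by simp
  have hcheb := meas_ge_le_variance_div_sq (memLp_finsetSum' S fun j _ => hYmem j) hr
  simp only [Finset.sum_apply, hmean] at hcheb
  exact ENNReal.toReal_le_of_le_ofReal
    (div_nonneg ((variance_nonneg _ _).trans hvar) (sq_nonneg r))
    (hcheb.trans (ENNReal.ofReal_le_ofReal (div_le_div_of_nonneg_right hvar (sq_nonneg r))))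

lemma measureReal_exists_mem_ge_le_card_mul [IsFiniteMeasure μ]
    (hident : ∀ i, IdentDistrib (ξ i) (ξ 0) μ μ) (S : Finset ℕ) (b : ℝ) :
    μ.real {ω | ∃ j ∈ S, b ≤ ξ j ω} ≤ #S * μ.real {ω | b ≤ ξ 0 ω} := by
  have hU : {ω | ∃ j ∈ S, b ≤ ξ j ω} = ⋃ j ∈ S, ξ j ⁻¹' Set.Ici b := by ext; simp
  calc μ.real {ω | ∃ j ∈ S, b ≤ ξ j ω} ≤ ∑ j ∈ S, μ.real (ξ j ⁻¹' Set.Ici b) :=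
        hU ▸ measureReal_biUnion_finset_le S _
    _ = #S * μ.real {ω | b ≤ ξ 0 ω} := by
        simp only [measureReal_def, (hident _).measure_mem_eq measurableSet_Ici, sum_const,
          nsmul_eq_mul]
        rfl

/-- Chebyshev's inequality for the sum truncated at level `b`, plus a union bound for the event
that some summand is not truncated. -/
lemma measureReal_abs_sum_sub_ge_le [IsProbabilityMeasure μ] (hmeas : ∀ i, Measurable (ξ i))
    (hindep : iIndepFun ξ μ) (hident : ∀ i, IdentDistrib (ξ i) (ξ 0) μ μ)
    (hξ0 : ∀ i ω, 0 ≤ ξ i ω) (S : Finset ℕ) {b r c : ℝ} (hb : 0 ≤ b) (hr : 0 < r)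
    (hc : |#S * ∫ ω, min (ξ 0 ω) b ∂μ - c| ≤ r) :
    μ.real {ω | 2 * r ≤ |∑ j ∈ S, ξ j ω - c|} ≤
      #S * μ.real {ω | b ≤ ξ 0 ω} + #S * (b * ∫ ω, min (ξ 0 ω) b ∂μ) / r ^ 2 := by
  set m := ∫ ω, min (ξ 0 ω) b ∂μ
  have hsub : {ω | 2 * r ≤ |∑ j ∈ S, ξ j ω - c|} ⊆
      {ω | ∃ j ∈ S, b ≤ ξ j ω} ∪ {ω | r ≤ |∑ j ∈ S, min (ξ j ω) b - #S * m|} := by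
    intro ω (hω : 2 * r ≤ |∑ j ∈ S, ξ j ω - c|)
    by_contra hcon
    have htrunc : ∑ j ∈ S, min (ξ j ω) b = ∑ j ∈ S, ξ j ω :=
      sum_congr rfl fun j hj => min_eq_left (le_of_not_ge fun h => hcon (.inl ⟨j, hj, h⟩))
    have hdev : |∑ j ∈ S, min (ξ j ω) b - #S * m| < r := lt_of_not_ge fun h => hcon (.inr h)
    have := abs_sub_le (∑ j ∈ S, ξ j ω) (#S * m) c
    rw [← htrunc] at this hω
    linarith
  calc μ.real {ω | 2 * r ≤ |∑ j ∈ S, ξ j ω - c|}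
      ≤ μ.real {ω | ∃ j ∈ S, b ≤ ξ j ω} + μ.real {ω | r ≤ |∑ j ∈ S, min (ξ j ω) b - #S * m|} :=
        (measureReal_mono hsub).trans (measureReal_union_le _ _)
    _ ≤ _ := add_le_add (measureReal_exists_mem_ge_le_card_mul hident S b)
        (measureReal_abs_sum_min_sub_ge_le hmeas hindep hident hξ0 S hb hr)

/-- On `{Mₙ ≥ t}` the maximizer `iS` is itself an index with `ξ i ≥ t`, and the sum over `K i`
is independent of `ξ i`. -/
lemma measureReal_sum_mem_and_exists_ge_le [IsFiniteMeasure μ] (hmeas : ∀ i, Measurable (ξ i))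
    (hindep : iIndepFun ξ μ) (hident : ∀ i, IdentDistrib (ξ i) (ξ 0) μ μ) {n : ℕ} {t q : ℝ}
    {D : Set ℝ} (hD : MeasurableSet D) (iS : Ω → ℕ)
    (hiS : ∀ ω, iS ω < n ∧ ∀ j < n, ξ j ω ≤ ξ (iS ω) ω) (K : ℕ → Finset ℕ)
    (hK : ∀ i < n, i ∉ K i) (hq : ∀ i < n, μ.real {ω | ∑ j ∈ K i, ξ j ω ∈ D} ≤ q) :
    μ.real {ω | ∑ j ∈ K (iS ω), ξ j ω ∈ D ∧ ∃ i < n, t ≤ ξ i ω} ≤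
      n * (q * μ.real {ω | t ≤ ξ 0 ω}) := by
  have hsub : {ω | ∑ j ∈ K (iS ω), ξ j ω ∈ D ∧ ∃ i < n, t ≤ ξ i ω} ⊆
      ⋃ i ∈ range n, (∑ j ∈ K i, ξ j) ⁻¹' D ∩ ξ i ⁻¹' Set.Ici t := by
    rintro ω ⟨hD, i, hi, hti⟩
    refine Set.mem_biUnion (mem_range.2 (hiS ω).1) ⟨?_, hti.trans ((hiS ω).2 i hi)⟩
    rwa [Set.mem_preimage, Finset.sum_apply]
  have hterm : ∀ i ∈ range n,
      μ.real ((∑ j ∈ K i, ξ j) ⁻¹' D ∩ ξ i ⁻¹' Set.Ici t) ≤ q * μ.real {ω | t ≤ ξ 0 ω} := by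
    intro i hi
    have hi := mem_range.1 hi
    have hindep_i := hindep.indepFun_finsetSum_of_notMem hmeas (hK i hi)
    rw [measureReal_def, hindep_i.measure_inter_preimage_eq_mul _ _ hD measurableSet_Ici,
      ENNReal.toReal_mul, (hident i).measure_mem_eq measurableSet_Ici]
    have hpre : (∑ j ∈ K i, ξ j) ⁻¹' D = {ω | ∑ j ∈ K i, ξ j ω ∈ D} := by
      ext; simp [Finset.sum_apply]
    exact mul_le_mul_of_nonneg_right (hpre ▸ hq i hi) ENNReal.toReal_nonneg
  calc _ ≤ ∑ i ∈ range n, μ.real ((∑ j ∈ K i, ξ j) ⁻¹' D ∩ ξ i ⁻¹' Set.Ici t) :=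
        (measureReal_mono hsub (measure_ne_top _ _)).trans (measureReal_biUnion_finset_le _ _)
    _ ≤ ∑ _i ∈ range n, q * μ.real {ω | t ≤ ξ 0 ω} := sum_le_sum hterm
    _ = n * (q * μ.real {ω | t ≤ ξ 0 ω}) := by simp

lemma measureReal_exists_ge [IsProbabilityMeasure μ] (hmeas : ∀ i, Measurable (ξ i))
    (hindep : iIndepFun ξ μ) (hident : ∀ i, IdentDistrib (ξ i) (ξ 0) μ μ) (n : ℕ) (t : ℝ) :
    μ.real {ω | ∃ i < n, t ≤ ξ i ω} = 1 - (1 - μ.real {ω | t ≤ ξ 0 ω}) ^ n := by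
  have hU : {ω | ∃ i < n, t ≤ ξ i ω}ᶜ = ⋂ i ∈ range n, ξ i ⁻¹' Set.Iio t := by ext; simp
  have hUm : MeasurableSet {ω | ∃ i < n, t ≤ ξ i ω} :=
    .of_compl (hU ▸ Finset.measurableSet_biInter _ fun i _ => hmeas i measurableSet_Iio)
  have hlt : ξ 0 ⁻¹' Set.Iio t = {ω | t ≤ ξ 0 ω}ᶜ := by ext; simp
  have hUc : μ.real {ω | ∃ i < n, t ≤ ξ i ω}ᶜ = (1 - μ.real {ω | t ≤ ξ 0 ω}) ^ n := by
    rw [hU, measureReal_def, hindep.measure_inter_preimage_eq_mul _ fun _ _ => measurableSet_Iio,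
      ENNReal.toReal_prod,
      ← probReal_compl_eq_one_sub (measurableSet_le measurable_const (hmeas 0)), ← hlt]
    simp [(hident _).measure_mem_eq measurableSet_Iio, measureReal_def]
  linarith [probReal_compl_eq_one_sub (μ := μ) hUm]

lemma measureReal_sum_mem_and_exists_ge_div_le [IsProbabilityMeasure μ]
    (hmeas : ∀ i, Measurable (ξ i)) (hindep : iIndepFun ξ μ)
    (hident : ∀ i, IdentDistrib (ξ i) (ξ 0) μ μ) {n : ℕ} {t q : ℝ} (hq0 : 0 ≤ q) {D : Set ℝ}
    (hD : MeasurableSet D) (iS : Ω → ℕ) (hiS : ∀ ω, iS ω < n ∧ ∀ j < n, ξ j ω ≤ ξ (iS ω) ω)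
    (K : ℕ → Finset ℕ) (hK : ∀ i < n, i ∉ K i)
    (hq : ∀ i < n, μ.real {ω | ∑ j ∈ K i, ξ j ω ∈ D} ≤ q)
    (hnp : n * μ.real {ω | t ≤ ξ 0 ω} ≤ 1) :
    μ.real {ω | ∑ j ∈ K (iS ω), ξ j ω ∈ D ∧ ∃ i < n, t ≤ ξ i ω} /
      μ.real {ω | ∃ i < n, t ≤ ξ i ω} ≤ 2 * q := by
  set p := μ.real {ω | t ≤ ξ 0 ω}
  rcases (measureReal_nonneg (μ := μ) (s := {ω | ∃ i < n, t ≤ ξ i ω})).eq_or_lt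
    with hden | hden
  · rw [← hden, div_zero]; positivity
  have hden' : n * p / 2 ≤ μ.real {ω | ∃ i < n, t ≤ ξ i ω} :=
    measureReal_exists_ge hmeas hindep hident n t ▸
      mul_div_two_le_one_sub_one_sub_pow measureReal_nonneg measureReal_le_one hnp
  rw [div_le_iff₀ hden]
  calc _ ≤ n * (q * p) :=
        measureReal_sum_mem_and_exists_ge_le hmeas hindep hident hD iS hiS K hK hq
    _ = 2 * q * (n * p / 2) := by ring
    _ ≤ 2 * q * μ.real {ω | ∃ i < n, t ≤ ξ i ω} := by gcongr

/-- Truncating at `b = ηX` with `η ≤ c ε² δ / 16`: the truncation shifts the mean by at most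
`εX/2`, Chebyshev's bound is at most `δ/4`, and so is the probability of an untruncated summand. -/
lemma measureReal_abs_sum_sub_ge_le_of_tail [IsProbabilityMeasure μ]
    (hmeas : ∀ i, Measurable (ξ i)) (hindep : iIndepFun ξ μ)
    (hident : ∀ i, IdentDistrib (ξ i) (ξ 0) μ μ) (hξ0 : ∀ i ω, 0 ≤ ξ i ω) {G : ℝ → ℝ}
    (hG : ∀ y, G y = ∫ t in Set.Ioc 0 y, μ.real {ω | t ≤ ξ 0 ω}) {n : ℕ} {S : Finset ℕ}
    (hS : #S ≤ n) {X η ε δ c : ℝ} (hX : 0 < X) (hη : 0 < η) (hη1 : η ≤ 1) (hc : 0 < c)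
    (hε : 0 < ε) (hηc : η ≤ c * ε ^ 2 * δ / 16) (hnG : c * (n * G X) ≤ X)
    (hnFδ : n * μ.real {ω | η * X ≤ ξ 0 ω} ≤ δ / 4)
    (hnFε : n * μ.real {ω | η * X ≤ ξ 0 ω} ≤ ε / 2) :
    μ.real {ω | ε * X ≤ |∑ j ∈ S, ξ j ω - #S * G X|} ≤ δ / 2 := by
  set F := fun t => μ.real {ω | t ≤ ξ 0 ω}
  have hF := antitone_measureReal_le (μ := μ) (ξ 0)
  have hG' (y : ℝ) (hy : 0 ≤ y) : G y = ∫ t in (0)..y, F t :=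
    (hG y).trans (intervalIntegral.integral_of_le hy).symm
  set b := η * X
  have hb : 0 < b := by positivity
  have hbX : b ≤ X := mul_le_of_le_one_left hX.le hη1
  have hS' : (#S : ℝ) ≤ n := by exact_mod_cast hS
  have hGb : ∫ ω, min (ξ 0 ω) b ∂μ = G b :=
    (integral_min_eq_setIntegral_measureReal_le (hmeas 0) (hξ0 0) hb.le).trans (hG b).symm
  have hGb0 : 0 ≤ G b := hG' b hb.le ▸ intervalIntegral.integral_nonneg hb.le fun _ _ =>
    measureReal_nonneg
  have hGbX : G b ≤ G X := by
    rw [hG' b hb.le, hG' X hX.le]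
    exact hF.intervalIntegral_mono (fun _ => measureReal_nonneg) hbX
  have hshift : G X - G b ≤ (X - b) * F b := by
    rw [hG' b hb.le, hG' X hX.le, intervalIntegral.integral_interval_sub_left hF.intervalIntegrable
      hF.intervalIntegrable]
    exact hF.intervalIntegral_le hbX
  have hmean : |#S * ∫ ω, min (ξ 0 ω) b ∂μ - #S * G X| ≤ ε * X / 2 := by
    rw [hGb, ← mul_sub, abs_mul, Nat.abs_cast, abs_sub_comm, abs_of_nonneg (by linarith)]
    calc #S * (G X - G b) ≤ n * ((X - b) * F b) := by gcongr
      _ ≤ X * (n * F b) := by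
          nlinarith [mul_nonneg (Nat.cast_nonneg (α := ℝ) n) (measureReal_nonneg (μ := μ)
            (s := {ω | b ≤ ξ 0 ω}))]
      _ ≤ ε * X / 2 := by nlinarith
  have hdev := measureReal_abs_sum_sub_ge_le hmeas hindep hident hξ0 S hb.le
    (by positivity : 0 < ε * X / 2) hmean
  rw [mul_div_cancel₀ _ two_ne_zero, hGb] at hdev
  have hcheb : #S * (b * G b) / (ε * X / 2) ^ 2 ≤ δ / 4 := by
    rw [div_le_iff₀ (by positivity)]
    have : c * (#S * (b * G b)) ≤ η * X ^ 2 :=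
      calc c * (#S * (b * G b)) ≤ b * (c * (n * G X)) := by
            linarith [mul_le_mul_of_nonneg_left (mul_le_mul hS' hGbX hGb0 n.cast_nonneg)
              (by positivity : 0 ≤ b * c)]
        _ ≤ η * X ^ 2 := by nlinarith
    nlinarith
  calc _ ≤ #S * F b + #S * (b * G b) / (ε * X / 2) ^ 2 := hdev
    _ ≤ δ / 4 + δ / 4 := by
        gcongr; exact (mul_le_mul_of_nonneg_right hS' measureReal_nonneg).trans hnFδ
    _ = δ / 2 := by ring

lemma tendsto_natCast_mul_measureReal_ge_zero [IsFiniteMeasure μ] {Y : Ω → ℝ} {ℓ : ℝ → ℝ}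
    (hℓ : SlowlyVarying ℓ) (htail : ∀ x > 0, μ.real {ω | x ≤ Y ω} = ℓ x / x) {G : ℝ → ℝ}
    (hG : ∀ y, G y = ∫ t in Set.Ioc 0 y, μ.real {ω | t ≤ Y ω}) {x : ℕ → ℝ} (hx : ∀ n, 0 < x n)
    {c : ℝ} (hc : 0 < c) (hnG : ∀ᶠ n : ℕ in atTop, c * (n * G (x n)) ≤ x n) {η : ℝ} (hη : 0 < η)
    (hη1 : η ≤ 1) : Tendsto (fun n : ℕ => n * μ.real {ω | η * x n ≤ Y ω}) atTop (𝓝 0) := by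
  have hF := antitone_measureReal_le (μ := μ) Y
  have hF0 : 0 ≤ fun t => μ.real {ω | t ≤ Y ω} := fun _ => measureReal_nonneg
  have hnG' : ∀ᶠ n : ℕ in atTop, c * (n * ∫ t in (0)..x n, μ.real {ω | t ≤ Y ω}) ≤ x n :=
    hnG.mono fun n h => by rwa [intervalIntegral.integral_of_le (hx n).le, ← hG]
  exact hF.tendsto_natCast_mul_apply_mul_zero hF0 (hℓ.isLittleO_intervalIntegral hF hF0 htail)
    (hF.tendsto_atTop_of_mul_intervalIntegral_le (hF.pos_of_slowlyVarying hF0 hℓ htail) hx hc hnG')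
    hc hnG' hη hη1

end IID

theorem stmt16_general {Ω : Type*} [MeasurableSpace Ω] (μ : Measure Ω) [IsProbabilityMeasure μ]
    (ξ : ℕ → Ω → ℝ) (hmeas : ∀ i, Measurable (ξ i))
    (hindep : iIndepFun ξ μ)
    (hident : ∀ i, IdentDistrib (ξ i) (ξ 0) μ μ)
    (hξ0 : ∀ i ω, 0 ≤ ξ i ω)
    (ℓ Fbar G : ℝ → ℝ)
    (hFbar : ∀ x, Fbar x = (μ {ω | x ≤ ξ 0 ω}).toReal)
    (htail : ∀ x > (0:ℝ), Fbar x = ℓ x / x)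
    (hslow : ∀ l > (0:ℝ), Tendsto (fun x => ℓ (l * x) / ℓ x) atTop (nhds 1))
    (hG : ∀ x, G x = ∫ t in Set.Ioc 0 x, Fbar t)
    (x a : ℕ → ℝ) (hx : ∀ n, 0 < x n)
    (hliminf : ∃ c > (0:ℝ), ∀ᶠ (n : ℕ) in atTop, c ≤ x n / ((n : ℝ) * G (x n)))
    (A : ℝ) (hA : 0 < A) (ha : Tendsto a atTop (nhds A))
    (iStar : ℕ → Ω → ℕ)
    (hiStar : ∀ n ω, 0 < n → iStar n ω < n ∧ ∀ j < n, ξ j ω ≤ ξ (iStar n ω) ω)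
    (K : ℕ → ℕ → ℕ → Finset ℕ)
    (hK : ∀ n k i, i < n → 1 ≤ k → k ≤ n - 1 →
      K n k i ⊆ (Finset.range n).erase i ∧ (K n k i).card = k) :
    ∀ ε > (0:ℝ), ∀ δ > (0:ℝ), ∀ᶠ (n : ℕ) in atTop, ∀ k, 1 ≤ k → k ≤ n - 1 →
      (μ {ω | ε * x n ≤ |(∑ j ∈ K n k (iStar n ω), ξ j ω) - (k : ℝ) * G (x n)|
            ∧ ∃ i < n, a n * x n ≤ ξ i ω}).toReal
        / (μ {ω | ∃ i < n, a n * x n ≤ ξ i ω}).toReal ≤ δ := by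
  intro ε hε δ hδ
  obtain ⟨c, hc, hlim⟩ := hliminf
  obtain rfl : Fbar = fun t => μ.real {ω | t ≤ ξ 0 ω} := funext hFbar
  have hnG : ∀ᶠ n : ℕ in atTop, c * (n * G (x n)) ≤ x n := by
    filter_upwards [hlim] with n hn
    rcases le_or_gt (n * G (x n)) 0 with h | h
    · nlinarith [hx n]
    · rwa [le_div_iff₀ h] at hn
  have hsmall {η : ℝ} (hη : 0 < η) (hη1 : η ≤ 1) :=
    tendsto_natCast_mul_measureReal_ge_zero hslow htail hG hx hc hnG hη hη1
  have hη : 0 < min 1 (c * ε ^ 2 * δ / 16) := lt_min one_pos (by positivity)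
  filter_upwards [hnG,
    (hsmall hη (min_le_left _ _)).eventually
      (eventually_le_nhds (lt_min (by positivity : 0 < δ / 4) (by positivity : 0 < ε / 2))),
    (hsmall (η := min (A / 2) 1) (lt_min (half_pos hA) one_pos) (min_le_right _ _)).eventually
      (eventually_le_nhds one_pos),
    ha.eventually (eventually_ge_nhds (half_lt_self hA)), eventually_gt_atTop 0]
    with n hnG hnη hnβ haβ hn
  intro k hk1 hk2
  have hnp : n * μ.real {ω | a n * x n ≤ ξ 0 ω} ≤ 1 :=
    (mul_le_mul_of_nonneg_left (antitone_measureReal_le (ξ 0) (mul_le_mul_of_nonneg_right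
      ((min_le_left _ _).trans haβ) (hx n).le)) n.cast_nonneg).trans hnβ
  refine (measureReal_sum_mem_and_exists_ge_div_le hmeas hindep hident (half_pos hδ).le
    (measurableSet_le measurable_const (measurable_id.sub_const _).abs) (iStar n)
    (fun ω => hiStar n ω hn) (K n k) (fun i hi h => notMem_erase i _ ((hK n k i hi hk1 hk2).1 h))
    (fun i hi => ?_) hnp).trans_eq (by ring)
  obtain ⟨-, hcard⟩ := hK n k i hi hk1 hk2
  have hdev := measureReal_abs_sum_sub_ge_le_of_tail hmeas hindep hident hξ0 hG (S := K n k i)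
    (by omega) (hx n) hη (min_le_left _ _) hc hε (min_le_right _ _) hnG
    (hnη.trans (min_le_left _ _)) (hnη.trans (min_le_right _ _))
  rwa [hcard] at hdev

/-- Theorem 2, assertion (condm): let `i*` be a (measurable) index attaining the
maximum `Mₙ` and, for `1 ≤ k ≤ n-1`, let `S_{n,k}` be the sum of the `ξⱼ` over a set
`K n k i*` of `k` of the remaining `n-1` indices (chosen as a function of `i*` only,
i.e. independently of the values of `ξⱼ, j ≠ i*`). Then for every `ε > 0`,
`max_{1≤k≤n-1} P(|S_{n,k} - kG(xₙ)| ≥ εxₙ | Mₙ ≥ aₙxₙ) → 0`. -/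
theorem stmt16 {Ω : Type*} [MeasurableSpace Ω] (μ : Measure Ω) [IsProbabilityMeasure μ]
    (ξ : ℕ → Ω → ℝ) (hmeas : ∀ i, Measurable (ξ i))
    (hindep : iIndepFun ξ μ)
    (hident : ∀ i, IdentDistrib (ξ i) (ξ 0) μ μ)
    (hξ0 : ∀ i ω, 0 ≤ ξ i ω)
    (ℓ Fbar G : ℝ → ℝ)
    (hFbar : ∀ x, Fbar x = (μ {ω | x ≤ ξ 0 ω}).toReal)
    (htail : ∀ x > (0:ℝ), Fbar x = ℓ x / x)
    (hslow : ∀ l > (0:ℝ), Tendsto (fun x => ℓ (l * x) / ℓ x) atTop (nhds 1))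
    (hG : ∀ x, G x = ∫ t in Set.Ioc 0 x, Fbar t)
    (x a : ℕ → ℝ) (hx : ∀ n, 0 < x n) (hapos : ∀ n, 0 < a n)
    (hliminf : ∃ c > (0:ℝ), ∀ᶠ (n : ℕ) in atTop, c ≤ x n / ((n : ℝ) * G (x n)))
    (A : ℝ) (hA : 0 < A) (ha : Tendsto a atTop (nhds A))
    (iStar : ℕ → Ω → ℕ) (hiStarMeas : ∀ n, Measurable (iStar n))
    (hiStar : ∀ n ω, 0 < n → iStar n ω < n ∧ ∀ j < n, ξ j ω ≤ ξ (iStar n ω) ω)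
    (K : ℕ → ℕ → ℕ → Finset ℕ)
    (hK : ∀ n k i, i < n → 1 ≤ k → k ≤ n - 1 →
      K n k i ⊆ (Finset.range n).erase i ∧ (K n k i).card = k) :
    ∀ ε > (0:ℝ), ∀ δ > (0:ℝ), ∀ᶠ (n : ℕ) in atTop, ∀ k, 1 ≤ k → k ≤ n - 1 →
      (μ {ω | ε * x n ≤ |(∑ j ∈ K n k (iStar n ω), ξ j ω) - (k : ℝ) * G (x n)|
            ∧ ∃ i < n, a n * x n ≤ ξ i ω}).toReal
        / (μ {ω | ∃ i < n, a n * x n ≤ ξ i ω}).toReal ≤ δ :=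
  stmt16_general μ ξ hmeas hindep hident hξ0 ℓ Fbar G hFbar htail hslow hG x a hx hliminf A hA ha
    iStar hiStar K hK
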